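/- The function Φ is differentiable and its gradient is Lipschitz continuous with constant L_Φ := (L_{f,1} + L_{g,2}C_{f_y}/μ)·(1 + C_{g_{xy}}/μ)²; that is, ‖∇Φ(x₁) − ∇Φ(x₂)‖ ≤ L_Φ‖x₁ − x₂‖ for all x₁, x₂ ∈ ℝ^{d_x}. -/

import Mathlib

/-!
As `y*(x)` minimises the `μ`-strongly convex function `g x`, it solves `∇_y g(x, y) = 0`, and the
map `∇_y g(x, ·)` is `μ`-strongly monotone. Comparing this equation at `x₁` and `x₂` shows that `y*`
is `C_{g_xy}/μ`-Lipschitz. A first-order expansion of the equation along the graph of `y*` then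
shows that `y*` is differentiable with `Dy* = -(∇_y∇_y g)⁻¹ (∇_x∇_y g)*`, where strong
monotonicity makes `∇_y∇_y g` invertible with inverse of norm at most `1/μ`. Hence
`∇Φ = ∇_x f + (Dy*)* ∇_y f`, and every factor is bounded and Lipschitz along the graph, whose
increments satisfy `‖x₁ - x₂‖ + ‖y*(x₁) - y*(x₂)‖ ≤ (1 + C_{g_xy}/μ) ‖x₁ - x₂‖`; the product rule
for such estimates gives `L_Φ`.
-/

noncomputable section

open scoped RealInnerProductSpace

variable {dx dy : ℕ}

/-- Partial gradient in the first argument. -/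
def gX (f : EuclideanSpace ℝ (Fin dx) → EuclideanSpace ℝ (Fin dy) → ℝ)
    (x : EuclideanSpace ℝ (Fin dx)) (y : EuclideanSpace ℝ (Fin dy)) :
    EuclideanSpace ℝ (Fin dx) :=
  gradient (fun x' => f x' y) x

/-- Partial gradient in the second argument. -/
def gY (f : EuclideanSpace ℝ (Fin dx) → EuclideanSpace ℝ (Fin dy) → ℝ)
    (x : EuclideanSpace ℝ (Fin dx)) (y : EuclideanSpace ℝ (Fin dy)) :
    EuclideanSpace ℝ (Fin dy) :=
  gradient (fun y' => f x y') y

/-- Second derivative `∇_y∇_y g (x,y)` as a linear map `ℝ^{d_y} → ℝ^{d_y}`. -/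
def gYY (g : EuclideanSpace ℝ (Fin dx) → EuclideanSpace ℝ (Fin dy) → ℝ)
    (x : EuclideanSpace ℝ (Fin dx)) (y : EuclideanSpace ℝ (Fin dy)) :
    EuclideanSpace ℝ (Fin dy) →L[ℝ] EuclideanSpace ℝ (Fin dy) :=
  fderiv ℝ (fun y' => gY g x y') y

/-- Mixed second derivative `∇_x∇_y g (x,y)` as a linear map `ℝ^{d_y} → ℝ^{d_x}`. -/
def gXY (g : EuclideanSpace ℝ (Fin dx) → EuclideanSpace ℝ (Fin dy) → ℝ)
    (x : EuclideanSpace ℝ (Fin dx)) (y : EuclideanSpace ℝ (Fin dy)) :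
    EuclideanSpace ℝ (Fin dy) →L[ℝ] EuclideanSpace ℝ (Fin dx) :=
  ContinuousLinearMap.adjoint (fderiv ℝ (fun x' => gY g x' y) x)

open Set Filter Asymptotics ContinuousLinearMap
open scoped Topology

def StrongMonotone {F : Type*} [NormedAddCommGroup F] [InnerProductSpace ℝ F] (μ : ℝ)
    (c : F → F) : Prop :=
  ∀ a b, μ * ‖a - b‖ ^ 2 ≤ ⟪c a - c b, a - b⟫

theorem ConvexOn.monotone_hasFDerivAt {E : Type*} [NormedAddCommGroup E] [NormedSpace ℝ E]
    {ψ : E → ℝ} {ψ' : E → E →L[ℝ] ℝ} (hψ : ConvexOn ℝ univ ψ)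
    (hψ' : ∀ z, HasFDerivAt ψ (ψ' z) z) (a b : E) :
    ψ' b (a - b) ≤ ψ' a (a - b) := by
  have hline : ConvexOn ℝ univ (ψ ∘ AffineMap.lineMap (k := ℝ) b a) := by
    simpa using hψ.comp_affineMap (AffineMap.lineMap (k := ℝ) b a)
  have hderiv (t : ℝ) :
      HasDerivAt (ψ ∘ AffineMap.lineMap b a) (ψ' (AffineMap.lineMap b a t) (a - b)) t :=
    (hψ' _).comp_hasDerivAt t AffineMap.hasDerivAt_lineMap
  have h0 := hline.le_slope_of_hasDerivAt (mem_univ 0) (mem_univ 1) one_pos (hderiv 0)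
  have h1 := hline.slope_le_of_hasDerivAt (mem_univ 0) (mem_univ 1) one_pos (hderiv 1)
  simpa using h0.trans h1

section StrongMonotone

variable {F : Type*} [NormedAddCommGroup F] [InnerProductSpace ℝ F] {μ : ℝ}

theorem StrongConvexOn.strongMonotone_gradient [CompleteSpace F] {φ : F → ℝ}
    (hφ : StrongConvexOn univ μ φ) (hd : Differentiable ℝ φ) :
    StrongMonotone μ (gradient φ) := by
  intro a b
  have hψ' (z : F) : HasFDerivAt (fun x => φ x - μ / 2 * ‖x‖ ^ 2)
      (fderiv ℝ φ z - (μ / 2) • (2 • innerSL ℝ z)) z :=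
    (hd z).hasFDerivAt.sub ((hasStrictFDerivAt_norm_sq z).hasFDerivAt.const_mul (μ / 2))
  have h := (strongConvexOn_iff_convex.mp hφ).monotone_hasFDerivAt hψ' a b
  simp only [sub_apply, smul_apply, innerSL_apply_apply, ← inner_gradient_left, smul_eq_mul,
    nsmul_eq_mul, Nat.cast_ofNat] at h
  rw [inner_sub_left, ← real_inner_self_eq_norm_sq, inner_sub_left]
  linarith

theorem StrongMonotone.mul_norm_sub_le {c : F → F} (hc : StrongMonotone μ c) (a b : F) :
    μ * ‖a - b‖ ≤ ‖c a - c b‖ := by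
  rcases (norm_nonneg (a - b)).eq_or_lt with h | h
  · simp [← h]
  · refine le_of_mul_le_mul_right ?_ h
    calc μ * ‖a - b‖ * ‖a - b‖ = μ * ‖a - b‖ ^ 2 := by ring
      _ ≤ ⟪c a - c b, a - b⟫ := hc a b
      _ ≤ ‖c a - c b‖ * ‖a - b‖ := real_inner_le_norm _ _

theorem ContinuousLinearMap.strongMonotone_iff {A : F →L[ℝ] F} :
    StrongMonotone μ A ↔ ∀ v, μ * ‖v‖ ^ 2 ≤ ⟪A v, v⟫ :=
  ⟨fun h v => by simpa using h v 0, fun h a b => by simpa [← map_sub] using h (a - b)⟩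

theorem HasFDerivAt.strongMonotone {c : F → F} {A : F →L[ℝ] F} {y : F}
    (hA : HasFDerivAt c A y) (hc : StrongMonotone μ c) : StrongMonotone μ A := by
  refine strongMonotone_iff.mpr fun v => ?_
  set q : ℝ → ℝ := fun t => ⟪c (y + t • v), v⟫
  have hq : HasDerivAt q ⟪A v, v⟫ 0 := by
    have hline : HasDerivAt (fun t : ℝ => y + t • v) v 0 := by
      simpa using ((hasDerivAt_id (0 : ℝ)).smul_const v).const_add y
    have hA' : HasFDerivAt c A (y + (0 : ℝ) • v) := by simpa using hA
    simpa [q, Function.comp_def] using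
      (hA'.comp_hasDerivAt 0 hline).inner ℝ (hasDerivAt_const (0 : ℝ) v)
  have hslope : ∀ t ∈ Ioi (0 : ℝ), μ * ‖v‖ ^ 2 ≤ slope q 0 t := by
    intro t (ht : 0 < t)
    have hmono : μ * (t * ‖v‖) ^ 2 ≤ t * ⟪c (y + t • v) - c y, v⟫ := by
      simpa [norm_smul, real_inner_smul_right, _root_.abs_of_pos ht] using hc (y + t • v) y
    rw [slope_def_field, le_div_iff₀ (by simpa using ht)]
    simp only [q, zero_smul, add_zero, sub_zero, ← inner_sub_left]
    nlinarith
  exact ge_of_tendsto ((hasDerivAt_iff_tendsto_slope.mp hq).mono_left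
    (nhdsWithin_mono _ fun t (ht : t ∈ Ioi 0) => ne_of_gt ht))
    (eventually_nhdsWithin_of_forall hslope)

variable [CompleteSpace F] {A : F →L[ℝ] F}

theorem StrongMonotone.isUnit (hA : StrongMonotone μ A) (hμ : 0 < μ) : IsUnit A :=
  isUnit_of_forall_le_norm_inner_map A (c := ⟨μ, hμ.le⟩) hμ fun v =>
    ((mul_comm _ _).trans_le (strongMonotone_iff.mp hA v)).trans (le_abs_self _)

theorem StrongMonotone.norm_ring_inverse_le (hA : StrongMonotone μ A) (hμ : 0 < μ) :
    ‖Ring.inverse A‖ ≤ μ⁻¹ := by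
  refine opNorm_le_bound _ (inv_nonneg.mpr hμ.le) fun w => ?_
  have hw : A (Ring.inverse A w) = w := congr($(Ring.mul_inverse_cancel A (hA.isUnit hμ)) w)
  rw [inv_mul_eq_div, le_div_iff₀ hμ, mul_comm]
  simpa [hw] using hA.mul_norm_sub_le (Ring.inverse A w) 0

end StrongMonotone

section PartialDerivatives

variable {E F H : Type*} [NormedAddCommGroup E] [NormedSpace ℝ E] [NormedAddCommGroup F]
  [NormedSpace ℝ F] [NormedAddCommGroup H] [NormedSpace ℝ H]

theorem DifferentiableAt.hasFDerivAt_uncurry_left {f : E → F → H} {x : E} {y : F}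
    (hf : DifferentiableAt ℝ (Function.uncurry f) (x, y)) :
    HasFDerivAt (fun x' => f x' y) (fderiv ℝ (Function.uncurry f) (x, y) ∘L inl ℝ E F) x :=
  HasFDerivAt.comp (f := fun x' => (x', y)) x hf.hasFDerivAt (hasFDerivAt_prodMk_left x y)

theorem DifferentiableAt.hasFDerivAt_uncurry_right {f : E → F → H} {x : E} {y : F}
    (hf : DifferentiableAt ℝ (Function.uncurry f) (x, y)) :
    HasFDerivAt (f x) (fderiv ℝ (Function.uncurry f) (x, y) ∘L inr ℝ E F) y :=
  HasFDerivAt.comp (f := fun y' => (x, y')) y hf.hasFDerivAt (hasFDerivAt_prodMk_right x y)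

theorem hasFDerivAt_of_forall_apply_eq_zero {G : E → F → H} {L : E × F →L[ℝ] H}
    {N : H →L[ℝ] F} {y : E → F} {x₀ : E}
    (hG : HasFDerivAt (Function.uncurry G) L (x₀, y x₀)) (hzero : ∀ x, G x (y x) = 0)
    (hN : N ∘L L ∘L inr ℝ E F = .id ℝ F)
    (hy : (fun x => y x - y x₀) =O[𝓝 x₀] fun x => x - x₀) :
    HasFDerivAt y (-(N ∘L L ∘L inl ℝ E F)) x₀ := by
  have hgraph : (fun x => (x, y x) - (x₀, y x₀)) =O[𝓝 x₀] fun x => x - x₀ :=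
    (isBigO_refl _ _).prod_left hy
  have htend : Tendsto (fun x => (x, y x)) (𝓝 x₀) (𝓝 (x₀, y x₀)) :=
    tendsto_sub_nhds_zero_iff.mp
      (hgraph.trans_tendsto (tendsto_sub_nhds_zero_iff.mpr tendsto_id))
  have hL : (fun x => L ((x, y x) - (x₀, y x₀))) =o[𝓝 x₀] fun x => x - x₀ := by
    simpa only [Function.comp_def, Function.uncurry_apply_pair, hzero, sub_self, zero_sub,
      neg_neg] using ((hG.isLittleO.comp_tendsto htend).trans_isBigO hgraph).neg_left
  refine .of_isLittleO (((N.isBigO_comp _ _).trans_isLittleO hL).congr_left fun x => ?_)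
  have hsplit : (x, y x) - (x₀, y x₀) = inl ℝ E F (x - x₀) + inr ℝ E F (y x - y x₀) := by
    ext <;> simp
  have hNinr : N (L (inr ℝ E F (y x - y x₀))) = y x - y x₀ := congr($hN (y x - y x₀))
  rw [hsplit, map_add, map_add, hNinr]
  simp only [neg_apply, comp_apply, sub_neg_eq_add]
  abel

end PartialDerivatives

section Gradient

variable {F : Type*} [NormedAddCommGroup F] [InnerProductSpace ℝ F] [CompleteSpace F]

theorem IsLocalMin.gradient_eq_zero {φ : F → ℝ} {a : F} (h : IsLocalMin φ a) :
    gradient φ a = 0 := by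
  simp [gradient, h.fderiv_eq_zero]

theorem ContDiff.uncurry_gradient_right {E : Type*} [NormedAddCommGroup E] [NormedSpace ℝ E]
    {φ : E → F → ℝ} {m n : WithTop ℕ∞} (hφ : ContDiff ℝ n (Function.uncurry φ))
    (hmn : m + 1 ≤ n) :
    ContDiff ℝ m (Function.uncurry fun x y => gradient (φ x) y) := by
  have hd := hφ.differentiable (zero_lt_one.trans_le (le_add_self.trans hmn)).ne'
  have hrepr : (Function.uncurry fun x y => gradient (φ x) y) = fun p =>
      (InnerProductSpace.toDual ℝ F).symm (fderiv ℝ (Function.uncurry φ) p ∘L inr ℝ E F) := by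
    ext1 p
    exact congrArg _ (hd p).hasFDerivAt_uncurry_right.fderiv
  rw [hrepr]
  exact (InnerProductSpace.toDual ℝ F).symm.contDiff.comp
    ((hφ.fderiv_right hmn).clm_comp contDiff_const)

variable {E : Type*} [NormedAddCommGroup E] [InnerProductSpace ℝ E] [CompleteSpace E]

theorem hasGradientAt_comp_graph {f : E → F → ℝ} {y : E → F} {D : E →L[ℝ] F} {x₀ : E}
    (hf : DifferentiableAt ℝ (Function.uncurry f) (x₀, y x₀)) (hy : HasFDerivAt y D x₀) :
    HasGradientAt (fun x => f x (y x))
      (gradient (fun x => f x (y x₀)) x₀ + adjoint D (gradient (f x₀) (y x₀))) x₀ := by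
  rw [hasGradientAt_iff_hasFDerivAt]
  refine (HasFDerivAt.comp (f := fun x => (x, y x)) x₀ hf.hasFDerivAt
    ((hasFDerivAt_id x₀).prodMk hy)).congr_fderiv ?_
  ext u
  rw [InnerProductSpace.toDual_apply_apply, inner_add_left, adjoint_inner_left,
    inner_gradient_left, inner_gradient_left, hf.hasFDerivAt_uncurry_left.fderiv,
    hf.hasFDerivAt_uncurry_right.fderiv]
  simp [← map_add]

theorem norm_add_adjoint_apply_sub_le {P₁ P₂ : E} {D₁ D₂ : E →L[ℝ] F} {w₁ w₂ : F}
    {a b c d e : ℝ} (hP : ‖P₁ - P₂‖ ≤ a) (hD : ‖D₁ - D₂‖ ≤ b) (hw₁ : ‖w₁‖ ≤ c) (hD₂ : ‖D₂‖ ≤ d)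
    (hw : ‖w₁ - w₂‖ ≤ e) :
    ‖P₁ + adjoint D₁ w₁ - (P₂ + adjoint D₂ w₂)‖ ≤ a + b * c + d * e := by
  have hsplit : P₁ + adjoint D₁ w₁ - (P₂ + adjoint D₂ w₂) =
      (P₁ - P₂) + (adjoint (D₁ - D₂) w₁ + adjoint D₂ (w₁ - w₂)) := by
    simp only [map_sub, sub_apply]
    abel
  have hb : 0 ≤ b := (norm_nonneg _).trans hD
  have hd : 0 ≤ d := (norm_nonneg _).trans hD₂
  calc _ ≤ ‖P₁ - P₂‖ + (‖adjoint (D₁ - D₂)‖ * ‖w₁‖ + ‖adjoint D₂‖ * ‖w₁ - w₂‖) := by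
        rw [hsplit]
        exact (norm_add_le _ _).trans (add_le_add le_rfl ((norm_add_le _ _).trans
          (add_le_add (le_opNorm _ _) (le_opNorm _ _))))
    _ ≤ a + (b * c + d * e) := by
        simp only [LinearIsometryEquiv.norm_map]
        gcongr
    _ = a + b * c + d * e := by ring

end Gradient

theorem norm_ring_inverse_comp_sub_le {E F : Type*} [NormedAddCommGroup E] [NormedSpace ℝ E]
    [NormedAddCommGroup F] [NormedSpace ℝ F] {H₁ H₂ : F →L[ℝ] F} {B₁ B₂ : E →L[ℝ] F}
    {μ C ε : ℝ} (hunit : IsUnit H₁ ↔ IsUnit H₂) (hH₁ : ‖Ring.inverse H₁‖ ≤ μ⁻¹)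
    (hH₂ : ‖Ring.inverse H₂‖ ≤ μ⁻¹) (hB₁ : ‖B₁‖ ≤ C) (hH : ‖H₁ - H₂‖ ≤ ε)
    (hB : ‖B₁ - B₂‖ ≤ ε) :
    ‖Ring.inverse H₁ ∘L B₁ - Ring.inverse H₂ ∘L B₂‖ ≤ ε / μ * (1 + C / μ) := by
  have hsplit : Ring.inverse H₁ ∘L B₁ - Ring.inverse H₂ ∘L B₂ =
      (Ring.inverse H₁ * (H₂ - H₁) * Ring.inverse H₂) ∘L B₁ + Ring.inverse H₂ ∘L (B₁ - B₂) := by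
    rw [← Ring.inverse_sub_inverse hunit, sub_comp, comp_sub]
    abel
  have hμ : 0 ≤ μ⁻¹ := (norm_nonneg _).trans hH₁
  rw [norm_sub_rev] at hH
  have hε : 0 ≤ ε := (norm_nonneg _).trans hH
  calc _ ≤ ‖Ring.inverse H₁‖ * ‖H₂ - H₁‖ * ‖Ring.inverse H₂‖ * ‖B₁‖
        + ‖Ring.inverse H₂‖ * ‖B₁ - B₂‖ := by
        rw [hsplit]
        refine (norm_add_le _ _).trans (add_le_add ((opNorm_comp_le _ _).trans ?_)
          (opNorm_comp_le _ _))
        gcongr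
        exact (norm_mul_le _ _).trans (by gcongr; exact norm_mul_le _ _)
    _ ≤ μ⁻¹ * ε * μ⁻¹ * C + μ⁻¹ * ε := by gcongr
    _ = ε / μ * (1 + C / μ) := by ring

section SolutionMap

variable {E F : Type*} [NormedAddCommGroup E] [NormedSpace ℝ E] [NormedAddCommGroup F]
  [InnerProductSpace ℝ F] {G : E → F → F} {y : E → F} {μ C : ℝ}

theorem norm_sub_le_of_strongMonotone (hG : Differentiable ℝ (Function.uncurry G))
    (hmono : ∀ x, StrongMonotone μ (G x)) (hC : ∀ x z, ‖fderiv ℝ (fun x' => G x' z) x‖ ≤ C)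
    (hy : ∀ x, G x (y x) = 0) (hμ : 0 < μ) (x₁ x₂ : E) :
    ‖y x₁ - y x₂‖ ≤ C / μ * ‖x₁ - x₂‖ := by
  have hlip : ‖G x₂ (y x₂) - G x₁ (y x₂)‖ ≤ C * ‖x₂ - x₁‖ :=
    convex_univ.norm_image_sub_le_of_norm_fderiv_le
      (fun x _ => (hG (x, y x₂)).hasFDerivAt_uncurry_left.differentiableAt)
      (fun x _ => hC x (y x₂)) (mem_univ x₁) (mem_univ x₂)
  rw [div_mul_eq_mul_div, le_div_iff₀ hμ, mul_comm, ← norm_sub_rev x₂]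
  calc μ * ‖y x₁ - y x₂‖ ≤ ‖G x₁ (y x₁) - G x₁ (y x₂)‖ := (hmono x₁).mul_norm_sub_le _ _
    _ = ‖G x₂ (y x₂) - G x₁ (y x₂)‖ := by rw [hy, hy]
    _ ≤ C * ‖x₂ - x₁‖ := hlip

-- `Ring.inverse` is `0` at a non-invertible operator; under strong monotonicity it is the inverse.
def implicitDeriv (G : E → F → F) (x : E) (z : F) : E →L[ℝ] F :=
  -(Ring.inverse (fderiv ℝ (G x) z) ∘L fderiv ℝ (fun x' => G x' z) x)

variable [CompleteSpace F]

theorem isUnit_fderiv_and_norm_inverse_le (hG : Differentiable ℝ (Function.uncurry G))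
    (hmono : ∀ x, StrongMonotone μ (G x)) (hμ : 0 < μ) (x : E) (z : F) :
    IsUnit (fderiv ℝ (G x) z) ∧ ‖Ring.inverse (fderiv ℝ (G x) z)‖ ≤ μ⁻¹ := by
  have h := (hG (x, z)).hasFDerivAt_uncurry_right.differentiableAt.hasFDerivAt.strongMonotone
    (hmono x)
  exact ⟨h.isUnit hμ, h.norm_ring_inverse_le hμ⟩

theorem hasFDerivAt_of_strongMonotone {K : ℝ} {x₀ : E}
    (hG : Differentiable ℝ (Function.uncurry G)) (hmono : ∀ x, StrongMonotone μ (G x))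
    (hy : ∀ x, G x (y x) = 0) (hylip : ∀ x, ‖y x - y x₀‖ ≤ K * ‖x - x₀‖) (hμ : 0 < μ) :
    HasFDerivAt y (implicitDeriv G x₀ (y x₀)) x₀ := by
  have hright := (hG (x₀, y x₀)).hasFDerivAt_uncurry_right
  have hunit := (isUnit_fderiv_and_norm_inverse_le hG hmono hμ x₀ (y x₀)).1
  rw [hright.fderiv] at hunit
  rw [implicitDeriv, (hG (x₀, y x₀)).hasFDerivAt_uncurry_left.fderiv, hright.fderiv]
  exact hasFDerivAt_of_forall_apply_eq_zero (hG _).hasFDerivAt hy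
    (Ring.inverse_mul_cancel _ hunit) (.of_bound K (.of_forall hylip))

theorem norm_implicitDeriv_le (hG : Differentiable ℝ (Function.uncurry G))
    (hmono : ∀ x, StrongMonotone μ (G x)) (hC : ∀ x z, ‖fderiv ℝ (fun x' => G x' z) x‖ ≤ C)
    (hμ : 0 < μ) (x : E) (z : F) :
    ‖implicitDeriv G x z‖ ≤ C / μ := by
  rw [implicitDeriv, norm_neg, div_eq_inv_mul]
  exact (opNorm_comp_le _ _).trans (mul_le_mul
    (isUnit_fderiv_and_norm_inverse_le hG hmono hμ x z).2 (hC x z) (norm_nonneg _)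
    (inv_nonneg.mpr hμ.le))

theorem norm_implicitDeriv_sub_le (hG : Differentiable ℝ (Function.uncurry G))
    (hmono : ∀ x, StrongMonotone μ (G x)) (hC : ∀ x z, ‖fderiv ℝ (fun x' => G x' z) x‖ ≤ C)
    (hμ : 0 < μ) {x₁ x₂ : E} {z₁ z₂ : F} {ε : ℝ}
    (hGy : ‖fderiv ℝ (G x₁) z₁ - fderiv ℝ (G x₂) z₂‖ ≤ ε)
    (hGx : ‖fderiv ℝ (fun x => G x z₁) x₁ - fderiv ℝ (fun x => G x z₂) x₂‖ ≤ ε) :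
    ‖implicitDeriv G x₁ z₁ - implicitDeriv G x₂ z₂‖ ≤ ε / μ * (1 + C / μ) := by
  obtain ⟨hunit₁, hinv₁⟩ := isUnit_fderiv_and_norm_inverse_le hG hmono hμ x₁ z₁
  obtain ⟨hunit₂, hinv₂⟩ := isUnit_fderiv_and_norm_inverse_le hG hmono hμ x₂ z₂
  rw [implicitDeriv, implicitDeriv, neg_sub_neg, norm_sub_rev]
  exact norm_ring_inverse_comp_sub_le (iff_of_true hunit₁ hunit₂) hinv₁ hinv₂ (hC x₁ z₁) hGy hGx

end SolutionMap

theorem norm_gXY (g : EuclideanSpace ℝ (Fin dx) → EuclideanSpace ℝ (Fin dy) → ℝ)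
    (x : EuclideanSpace ℝ (Fin dx)) (y : EuclideanSpace ℝ (Fin dy)) :
    ‖gXY g x y‖ = ‖fderiv ℝ (fun x' => gY g x' y) x‖ :=
  LinearIsometryEquiv.norm_map _ _

theorem norm_gXY_sub_gXY (g : EuclideanSpace ℝ (Fin dx) → EuclideanSpace ℝ (Fin dy) → ℝ)
    (x₁ x₂ : EuclideanSpace ℝ (Fin dx)) (y₁ y₂ : EuclideanSpace ℝ (Fin dy)) :
    ‖gXY g x₁ y₁ - gXY g x₂ y₂‖ =
      ‖fderiv ℝ (fun x => gY g x y₁) x₁ - fderiv ℝ (fun x => gY g x y₂) x₂‖ := by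
  rw [gXY, gXY, ← map_sub, LinearIsometryEquiv.norm_map]

/-- `Φ(x) := f(x, y*(x))` is differentiable with
`L_Φ := (L_{f,1} + L_{g,2} C_{f_y}/μ)(1 + C_{g_{xy}}/μ)²`-Lipschitz gradient. -/
theorem Phi_gradient_lipschitz
    (f g : EuclideanSpace ℝ (Fin dx) → EuclideanSpace ℝ (Fin dy) → ℝ)
    (hf : ContDiff ℝ 2 (Function.uncurry f)) (hg : ContDiff ℝ 2 (Function.uncurry g))
    (μ Lf1 Lg2 Cfy Cgxy : ℝ) (hμ : 0 < μ)
    (hsc : ∀ x, StrongConvexOn Set.univ μ (fun y => g x y))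
    (hfx_lip : ∀ x₁ y₁ x₂ y₂, ‖gX f x₁ y₁ - gX f x₂ y₂‖ ≤ Lf1 * (‖x₁ - x₂‖ + ‖y₁ - y₂‖))
    (hfy_lip : ∀ x₁ y₁ x₂ y₂, ‖gY f x₁ y₁ - gY f x₂ y₂‖ ≤ Lf1 * (‖x₁ - x₂‖ + ‖y₁ - y₂‖))
    (hgxy_lip : ∀ x₁ y₁ x₂ y₂, ‖gXY g x₁ y₁ - gXY g x₂ y₂‖ ≤ Lg2 * (‖x₁ - x₂‖ + ‖y₁ - y₂‖))
    (hgyy_lip : ∀ x₁ y₁ x₂ y₂, ‖gYY g x₁ y₁ - gYY g x₂ y₂‖ ≤ Lg2 * (‖x₁ - x₂‖ + ‖y₁ - y₂‖))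
    (hfy_bd : ∀ x y, ‖gY f x y‖ ≤ Cfy)
    (hgxy_bd : ∀ x y, ‖gXY g x y‖ ≤ Cgxy)
    (ystar : EuclideanSpace ℝ (Fin dx) → EuclideanSpace ℝ (Fin dy))
    (hystar : ∀ x y, g x (ystar x) ≤ g x y) :
    Differentiable ℝ (fun x => f x (ystar x)) ∧
      ∀ x₁ x₂, ‖gradient (fun x => f x (ystar x)) x₁ - gradient (fun x => f x (ystar x)) x₂‖
        ≤ (Lf1 + Lg2 * Cfy / μ) * (1 + Cgxy / μ) ^ 2 * ‖x₁ - x₂‖ := by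
  have hG : Differentiable ℝ (Function.uncurry (gY g)) :=
    (hg.uncurry_gradient_right (m := 1) (by norm_num)).differentiable one_ne_zero
  have hmono (x) : StrongMonotone μ (gY g x) := (hsc x).strongMonotone_gradient fun z =>
    ((hg.differentiable (by norm_num)) (x, z)).hasFDerivAt_uncurry_right.differentiableAt
  have hcrit (x) : gY g x (ystar x) = 0 := IsLocalMin.gradient_eq_zero (.of_forall (hystar x))
  have hC (x y) : ‖fderiv ℝ (fun x' => gY g x' y) x‖ ≤ Cgxy := norm_gXY g x y ▸ hgxy_bd x y
  have hylip := norm_sub_le_of_strongMonotone hG hmono hC hcrit hμ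
  have hgrad (x) : HasGradientAt (fun x => f x (ystar x))
      (gX f x (ystar x) + adjoint (implicitDeriv (gY g) x (ystar x)) (gY f x (ystar x))) x :=
    hasGradientAt_comp_graph ((hf.differentiable (by norm_num)) _)
      (hasFDerivAt_of_strongMonotone hG hmono hcrit (hylip · x) hμ)
  refine ⟨fun x => (hgrad x).differentiableAt, fun x₁ x₂ => ?_⟩
  rcases eq_or_ne x₁ x₂ with rfl | hne
  · simp
  set δ := ‖x₁ - x₂‖ + ‖ystar x₁ - ystar x₂‖
  have hDsub : ‖implicitDeriv (gY g) x₁ (ystar x₁) - implicitDeriv (gY g) x₂ (ystar x₂)‖ ≤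
      Lg2 * δ / μ * (1 + Cgxy / μ) :=
    norm_implicitDeriv_sub_le hG hmono hC hμ (hgyy_lip _ _ _ _)
      ((norm_gXY_sub_gXY g _ _ _ _).symm.trans_le (hgxy_lip _ _ _ _))
  have hbound : ‖gradient (fun x => f x (ystar x)) x₁ - gradient (fun x => f x (ystar x)) x₂‖ ≤
      (Lf1 + Lg2 * Cfy / μ) * (1 + Cgxy / μ) * δ := by
    rw [(hgrad x₁).gradient, (hgrad x₂).gradient]
    exact (norm_add_adjoint_apply_sub_le (hfx_lip _ _ _ _) hDsub (hfy_bd _ _)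
      (norm_implicitDeriv_le hG hmono hC hμ _ _) (hfy_lip _ _ _ _)).trans_eq (by ring)
  -- the constant is nonnegative because `hbound` bounds a norm by it times `δ > 0`
  have hK := nonneg_of_mul_nonneg_left ((norm_nonneg _).trans hbound)
    (add_pos_of_pos_of_nonneg (norm_pos_iff.mpr (sub_ne_zero.mpr hne)) (norm_nonneg _))
  have hδ : δ ≤ (1 + Cgxy / μ) * ‖x₁ - x₂‖ := by linarith [hylip x₁ x₂]
  calc _ ≤ _ := hbound
    _ ≤ _ := mul_le_mul_of_nonneg_left hδ hK
    _ = _ := by ring
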